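/- Let p be a prime with p ≡ 1 (mod 4), let L, M be integers with p = L² + 4M², and let q be an odd prime with q ≠ p that does not divide L·M. If there exists an integer m such that q divides M·(m⁴ − 6m² + 1) + 2L·(m³ − m), then q* is a biquadratic residue modulo p. -/

import Mathlib

/-!
Let `χ` be a character of order 4 on `(ℤ/p)ˣ` with values in `ℤ[i]` and `J = J(χ, χ)` its Jacobi
sum. Then `N(J) = p` and `J ≡ -1 (mod 2)`, so the uniqueness of `p = a² + b²` with `a` odd gives
`J = ±π` or `J = ±π̄`, where `π = L + 2Mi`.

Reduce modulo `q`, in an algebraically closed field of characteristic `q`. After possibly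
replacing `i` by `-i` we have `J² = π²`, so the Gauss sum `G = G(χ, ψ)` satisfies
`G⁴ = p J² = π³π̄`. The hypothesis on `m` says exactly that `π (m + i)⁴ = π̄ (m - i)⁴`, hence
`G⁴ = t⁴` with `t = π (m + i) / (m - i)`. Frobenius fixes `t` if `q ≡ 1 (mod 4)` and sends it to
`π̄ (m - i) / (m + i) = p / t` if `q ≡ 3 (mod 4)`, so `G ^ (q - 1) = 1`, resp. `G ^ (q + 1) = p`.
Comparing with `χ^q(q) G^q = G(χ^q, ψ)` and `G(χ) G(χ⁻¹) = χ(-1) p` gives `χ(q) = 1`,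
resp. `χ(-q) = 1`; as `χ` has order 4 on a cyclic group, its kernel consists of fourth powers.
-/

namespace Int

theorem sq_eq_sq_of_dvd_mul_sub_mul {p a b c d : ℤ} (hp : Prime p) (hab : a ^ 2 + b ^ 2 = p)
    (hcd : c ^ 2 + d ^ 2 = p) (ha : Odd a) (hd : Even d) (hdvd : p ∣ a * d - b * c) :
    a ^ 2 = c ^ 2 := by
  obtain ⟨k, hk⟩ := hdvd
  have hsum : (p * k) ^ 2 + (a * c + b * d) ^ 2 = p ^ 2 := by
    rw [← hk]; linear_combination (c ^ 2 + d ^ 2) * hab + p * hcd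
  rcases eq_or_ne k 0 with rfl | hk0
  · refine mul_left_cancel₀ hp.ne_zero ?_
    linear_combination c ^ 2 * hab - a ^ 2 * hcd + (a * d + b * c) * hk
  · have hac : a * c + b * d = 0 := by
      have : 1 ≤ k ^ 2 := by nlinarith [sq_pos_of_ne_zero hk0]
      nlinarith [sq_nonneg (a * c + b * d), sq_nonneg p]
    have had : a ^ 2 = d ^ 2 := mul_left_cancel₀ hp.ne_zero <| by
      linear_combination d ^ 2 * hab - a ^ 2 * hcd + (a * c - b * d) * hac
    exact (Int.not_even_iff_odd.2 (had ▸ ha.pow) (by simpa [Int.even_pow] using hd)).elim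

theorem sq_eq_sq_of_sq_add_sq_eq_sq_add_sq {p a b c d : ℤ} (hp : Prime p)
    (hab : a ^ 2 + b ^ 2 = p) (hcd : c ^ 2 + d ^ 2 = p) (ha : Odd a) (hd : Even d) :
    a ^ 2 = c ^ 2 := by
  have : p ∣ (a * d - b * c) * (a * d - -b * c) :=
    ⟨a ^ 2 - c ^ 2, by linear_combination a ^ 2 * hcd - c ^ 2 * hab⟩
  rcases hp.dvd_or_dvd this with h | h
  · exact sq_eq_sq_of_dvd_mul_sub_mul hp hab hcd ha hd h
  · exact sq_eq_sq_of_dvd_mul_sub_mul hp (by rwa [neg_sq]) hcd ha hd h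

end Int

theorem IsPrimitiveRoot.of_sq_eq_neg_one {R : Type*} [CommRing R] {i : R} (h2 : (2 : R) ≠ 0)
    (hi : i ^ 2 = -1) : IsPrimitiveRoot i 4 := by
  have hord : orderOf i = 2 ^ 2 := orderOf_eq_prime_pow (by
      rw [pow_one, hi]; intro h; apply h2; linear_combination -h)
    (by rw [pow_succ, pow_one, pow_mul, hi]; norm_num)
  simpa [hord] using IsPrimitiveRoot.orderOf i

theorem ne_zero_of_mul_pow_eq_mul_pow {K : Type*} [CommMonoidWithZero K] [NoZeroDivisors K]
    {x y a b : K} {n : ℕ} (hn : n ≠ 0) (h : x * a ^ n = y * b ^ n) (hx : x ≠ 0) (hy : y ≠ 0)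
    (hab : a ≠ b) : a ≠ 0 ∧ b ≠ 0 := by
  constructor <;> rintro rfl <;> simp_all [zero_pow hn, eq_comm]

namespace MulChar

variable {M R : Type*} [CommMonoid M] [CommMonoidWithZero R]

theorem exists_apply_eq [Fintype M] [DecidableEq M] {g : Mˣ} (hg : ∀ x, x ∈ Subgroup.zpowers g)
    {ζ : R} (hζ : ζ ^ Fintype.card Mˣ = 1) : ∃ χ : MulChar M R, χ g = ζ :=
  ⟨ofRootOfUnity (rootsOfUnity.mkOfPowEq ζ hζ).2 hg, ofRootOfUnity_spec _ hg⟩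

theorem orderOf_eq_orderOf_apply {χ : MulChar M R} {g : Mˣ} (hg : ∀ x, x ∈ Subgroup.zpowers g) :
    orderOf χ = orderOf (χ g) :=
  orderOf_eq_orderOf_iff.2 fun n ↦ by rw [eq_iff hg, pow_apply_coe, one_apply_coe]

theorem exists_pow_eq_of_apply_eq_one {χ : MulChar M R} {g : Mˣ}
    (hg : ∀ x, x ∈ Subgroup.zpowers g) {v : Mˣ} (hv : χ v = 1) :
    ∃ w : Mˣ, w ^ orderOf (χ g) = v := by
  obtain ⟨k, rfl⟩ := Subgroup.mem_zpowers_iff.1 (hg v)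
  have : (toUnitHom χ g) ^ k = 1 := by
    rw [← map_zpow]; ext; rw [coe_toUnitHom, hv, Units.val_one]
  obtain ⟨j, rfl⟩ := orderOf_dvd_iff_zpow_eq_one.2 this
  refine ⟨g ^ j, ?_⟩
  rw [← zpow_natCast, ← zpow_mul, mul_comm, ← orderOf_units, coe_toUnitHom]

end MulChar

namespace GaussianInt

theorem sq_eq_sq_or_sq_eq_star_sq {x y : GaussianInt} (hp : Prime x.norm)
    (hxy : x.norm = y.norm) (hx : Odd x.re) (hy : Even y.im) :
    x ^ 2 = y ^ 2 ∨ x ^ 2 = star y ^ 2 := by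
  have hx' : x.re ^ 2 + x.im ^ 2 = x.norm := by rw [Zsqrtd.norm_def]; ring
  have hy' : y.re ^ 2 + y.im ^ 2 = x.norm := by rw [hxy, Zsqrtd.norm_def]; ring
  have hre := Int.sq_eq_sq_of_sq_add_sq_eq_sq_add_sq hp hx' hy' hx hy
  have him : x.im ^ 2 = y.im ^ 2 := by linarith
  have h : x = y ∨ x = -y ∨ x = star y ∨ x = -star y := by
    rcases sq_eq_sq_iff_eq_or_eq_neg.1 hre with h1 | h1 <;>
      rcases sq_eq_sq_iff_eq_or_eq_neg.1 him with h2 | h2 <;>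
      simp [Zsqrtd.ext_iff, h1, h2]
  rcases h with rfl | rfl | rfl | rfl <;> simp

theorem isPrimitiveRoot_sqrtd : IsPrimitiveRoot (Zsqrtd.sqrtd : GaussianInt) 4 :=
  .of_sq_eq_neg_one (by decide) (by rw [sq, Zsqrtd.dmuld]; rfl)

variable {F : Type*} [Field F] [Fintype F] {χ ψ : MulChar F GaussianInt}

theorem odd_re_jacobiSum (hχ : χ ^ 4 = 1) (hψ : ψ ^ 4 = 1) (hF : 4 ∣ Fintype.card F - 1) :
    Odd (jacobiSum χ ψ).re := by
  obtain ⟨z, -, hz⟩ :=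
    exists_jacobiSum_eq_neg_one_add (by norm_num) hχ hψ hF isPrimitiveRoot_sqrtd
  have h : (Zsqrtd.sqrtd - 1 : GaussianInt) ^ 2 = ⟨0, -2⟩ := by decide
  refine ⟨z.im - 1, ?_⟩
  rw [hz, h]
  simp only [Zsqrtd.re_add, Zsqrtd.re_neg, Zsqrtd.re_one, Zsqrtd.re_mul]
  ring

theorem norm_jacobiSum (hχ : χ ≠ 1) (hψ : ψ ≠ 1) (hχψ : χ * ψ ≠ 1) :
    (jacobiSum χ ψ).norm = Fintype.card F := by
  set χ' := χ.ringHomComp toComplex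
  set ψ' := ψ.ringHomComp toComplex
  have hne {η : MulChar F GaussianInt} : η ≠ 1 → η.ringHomComp toComplex ≠ 1 :=
    (MulChar.ringHomComp_ne_one_iff toComplex_injective).2
  have hchar : ringChar ℂ ≠ ringChar F := by
    simpa only [ringChar.eq_zero] using (CharP.ringChar_ne_zero_of_finite F).symm
  have h := jacobiSum_mul_jacobiSum_inv hchar (hne hχ) (hne hψ)
    (by rw [← MulChar.ringHomComp_mul]; exact hne hχψ)
  rw [← MulChar.star_eq_inv, ← MulChar.star_eq_inv] at h
  have hstar : jacobiSum (star χ') (star ψ') = starRingEnd ℂ (jacobiSum χ' ψ') :=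
    jacobiSum_ringHomComp χ' ψ' (starRingEnd ℂ)
  rw [hstar, Complex.mul_conj, jacobiSum_ringHomComp, ← intCast_complex_norm] at h
  exact_mod_cast h

end GaussianInt

section GaussSum

variable {F R : Type*} [Field F] [Fintype F] [CommRing R] {χ : MulChar F R} {ψ : AddChar F R}

theorem pow_apply_mul_gaussSum_pow_char (q : ℕ) [Fact q.Prime] [CharP R q]
    (hq : IsUnit (q : F)) : (χ ^ q) q * gaussSum χ ψ ^ q = gaussSum (χ ^ q) ψ := by
  rw [gaussSum_frob, AddChar.pow_mulShift, ← hq.unit_spec, gaussSum_mulShift]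

variable [IsDomain R]

theorem gaussSum_pow_four (hχ : orderOf χ = 4) (hψ : ψ.IsPrimitive) :
    gaussSum χ ψ ^ 4 = Fintype.card F * jacobiSum χ χ ^ 2 := by
  have hsq : χ * χ ≠ 1 := by
    rw [← sq]; exact pow_ne_one_of_lt_orderOf two_ne_zero (by omega)
  have hquad : (χ * χ).IsQuadratic := MulChar.isQuadratic_iff_sq_eq_one.2 <| by
    rw [← sq, ← pow_mul, show 2 * 2 = orderOf χ by omega, pow_orderOf_eq_one]
  have hneg : (χ * χ) (-1) = 1 := by
    rw [MulChar.mul_apply, ← map_mul, neg_mul_neg, one_mul, map_one]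
  rw [show gaussSum χ ψ ^ 4 = (gaussSum χ ψ * gaussSum χ ψ) ^ 2 by ring,
    ← jacobiSum_mul_nontrivial hsq, mul_pow, gaussSum_sq hsq hquad hψ, hneg, one_mul]

variable (q : ℕ) [Fact q.Prime] [CharP R q]

theorem apply_eq_one_of_gaussSum_pow_sub_one (hq : IsUnit (q : F)) (hq4 : q % 4 = 1)
    (hχ : orderOf χ = 4) (hg : gaussSum χ ψ ^ (q - 1) = 1) : χ q = 1 := by
  have hχq : χ ^ q = χ := by rw [← pow_mod_orderOf, hχ, hq4, pow_one]
  have hG : gaussSum χ ψ ≠ 0 := by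
    rintro h0
    rw [h0, zero_pow (by have := (Fact.out : q.Prime).two_le; omega)] at hg
    exact zero_ne_one hg
  have hGq : gaussSum χ ψ ^ q = gaussSum χ ψ := by
    rw [← Nat.sub_add_cancel (Fact.out : q.Prime).one_le, pow_succ, hg, one_mul]
  have h := pow_apply_mul_gaussSum_pow_char q hq (χ := χ) (ψ := ψ)
  rw [hχq, hGq] at h
  exact mul_right_cancel₀ hG (h.trans (one_mul _).symm)

theorem apply_neg_eq_one_of_gaussSum_pow_add_one (hq : IsUnit (q : F)) (hq4 : q % 4 = 3)
    (hχ : orderOf χ = 4) (hψ : ψ.IsPrimitive) (hcard : (Fintype.card F : R) ≠ 0)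
    (hg : gaussSum χ ψ ^ (q + 1) = Fintype.card F) : χ (-q) = 1 := by
  have hχq : χ ^ q = χ ^ (orderOf χ - 1) := by rw [← pow_mod_orderOf, hχ, hq4]
  have hχ1 : χ ≠ 1 := by rintro rfl; simp at hχ
  have hneg : χ (-1) = χ q ^ 3 := by
    refine mul_right_cancel₀ hcard ?_
    rw [← gaussSum_mul_gaussSum_pow_orderOf_sub_one hχ1 hψ, ← hχq,
      ← pow_apply_mul_gaussSum_pow_char q hq, ← hg, hχq, hχ,
      MulChar.pow_apply' _ (by norm_num)]
    ring
  calc χ (-q) = χ (-1) * χ q := by rw [neg_eq_neg_one_mul, map_mul]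
    _ = (χ ^ orderOf χ) q := by rw [hneg, hχ, MulChar.pow_apply' _ four_ne_zero]; ring
    _ = 1 := by rw [pow_orderOf_eq_one, ← hq.unit_spec, MulChar.one_apply_coe]

end GaussSum

theorem mul_add_pow_four_sub_mul_sub_pow_four {R : Type*} [CommRing R] {L M m i : R}
    (hi : i ^ 2 = -1) :
    (L + 2 * M * i) * (m + i) ^ 4 - (L - 2 * M * i) * (m - i) ^ 4 =
      4 * i * (M * (m ^ 4 - 6 * m ^ 2 + 1) + 2 * L * (m ^ 3 - m)) := by
  linear_combination (8 * L * i * m + 24 * M * i * m ^ 2 + 4 * M * i * (i ^ 2 - 1)) * hi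

theorem exists_pow_four_eq_of_dvd {K : Type*} [Field K] (q : ℕ) [Fact q.Prime] [CharP K q]
    {L M m : ℤ} (hm : (q : ℤ) ∣ M * (m ^ 4 - 6 * m ^ 2 + 1) + 2 * L * (m ^ 3 - m))
    {i : K} (hi : i ^ 2 = -1) (h2 : (2 : K) ≠ 0) (hLM : (L : K) ^ 2 + 4 * M ^ 2 ≠ 0) :
    ∃ t : K, t ^ 4 = (L ^ 2 + 4 * M ^ 2) * (L + 2 * M * i) ^ 2 ∧
      (q % 4 = 1 → t ^ (q - 1) = 1) ∧ (q % 4 = 3 → t ^ (q + 1) = L ^ 2 + 4 * M ^ 2) := by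
  set π := (L : K) + 2 * M * i with hπ_def
  set π' := (L : K) - 2 * M * i with hπ'_def
  set a := (m : K) + i with ha_def
  set b := (m : K) - i with hb_def
  have hnorm : (L : K) ^ 2 + 4 * M ^ 2 = π * π' := by linear_combination (4 * (M : K) ^ 2) * hi
  have hab : π * a ^ 4 = π' * b ^ 4 := by
    have hD := (CharP.intCast_eq_zero_iff K q _).2 hm
    push_cast at hD
    rw [← sub_eq_zero, mul_add_pow_four_sub_mul_sub_pow_four hi, hD, mul_zero]
  have hsub : a - b = 2 * i := by ring
  rw [hnorm] at hLM ⊢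
  clear_value π π' a b
  have hπ : π ≠ 0 := left_ne_zero_of_mul hLM
  have hi0 : i ≠ 0 := by rintro rfl; norm_num at hi
  obtain ⟨ha, hb⟩ := ne_zero_of_mul_pow_eq_mul_pow four_ne_zero hab hπ
    (right_ne_zero_of_mul hLM) (sub_ne_zero.1 (hsub ▸ mul_ne_zero h2 hi0))
  have hσ (x : ℤ) : (x : K) ^ q = x := by rw [← frobenius_def, map_intCast]
  have h2q : (2 : K) ^ q = 2 := by exact_mod_cast hσ 2
  have hi4 : i ^ 4 = 1 := by linear_combination (i ^ 2 - 1) * hi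
  refine ⟨π * a / b, ?_, fun hq4 ↦ ?_, fun hq4 ↦ ?_⟩
  · rw [div_pow, mul_pow, div_eq_iff (pow_ne_zero 4 hb)]
    linear_combination π ^ 3 * hab
  · have hiq : i ^ q = i := by
      rw [← Nat.div_add_mod q 4, pow_add, pow_mul, hi4, one_pow, hq4, one_mul, pow_one]
    have ht : (π * a / b) ^ q = π * a / b := by
      rw [div_pow, mul_pow, hπ_def, ha_def, hb_def]
      simp only [add_pow_char, sub_pow_char, mul_pow, hσ, h2q, hiq]
    refine mul_right_cancel₀ (div_ne_zero (mul_ne_zero hπ ha) hb) ?_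
    rw [← pow_succ, Nat.sub_add_cancel (Fact.out : q.Prime).one_le, ht, one_mul]
  · have hiq : i ^ q = -i := by
      rw [← Nat.div_add_mod q 4, pow_add, pow_mul, hi4, one_pow, hq4, one_mul]
      linear_combination i * hi
    have ht : (π * a / b) ^ q = π' * b / a := by
      rw [div_pow, mul_pow, hπ_def, hπ'_def, ha_def, hb_def]
      simp only [add_pow_char, sub_pow_char, mul_pow, hσ, h2q, hiq]
      ring
    rw [pow_succ, ht]
    field_simp

theorem apply_neg_one_pow_mul_eq_one_of_dvd {F : Type*} [Field F] {p q : ℕ} [Fact p.Prime]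
    [Fact q.Prime] [CharP F q] (hq2 : q ≠ 2) (hqp : ¬q ∣ p) {χ : MulChar (ZMod p) F}
    (hχ : orderOf χ = 4) {ψ : AddChar (ZMod p) F} (hψ : ψ.IsPrimitive) {L M m : ℤ}
    (hLM : (p : ℤ) = L ^ 2 + 4 * M ^ 2)
    (hm : (q : ℤ) ∣ M * (m ^ 4 - 6 * m ^ 2 + 1) + 2 * L * (m ^ 3 - m)) {i : F}
    (hi : i ^ 2 = -1) (hJ : jacobiSum χ χ ^ 2 = (L + 2 * M * i) ^ 2) :
    χ ((-1) ^ ((q - 1) / 2) * q) = 1 := by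
  have hq := (Fact.out : q.Prime)
  have hqu : IsUnit (q : ZMod p) := ZMod.isUnit_prime_of_not_dvd hq hqp
  have hpF : (p : F) = L ^ 2 + 4 * M ^ 2 := by exact_mod_cast congrArg (Int.cast (R := F)) hLM
  have hp0 : (p : F) ≠ 0 := by rwa [Ne, CharP.cast_eq_zero_iff F q]
  have h2 : (2 : F) ≠ 0 := Ring.two_ne_zero (by rwa [ringChar.eq F q])
  obtain ⟨t, ht, ht1, ht3⟩ := exists_pow_four_eq_of_dvd q hm hi h2 (hpF ▸ hp0)
  have hG : gaussSum χ ψ ^ 4 = t ^ 4 := by rw [gaussSum_pow_four hχ hψ, ZMod.card, hJ, ht, hpF]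
  rcases Nat.odd_mod_four_iff.1 (Nat.odd_iff.1 (hq.odd_of_ne_two hq2)) with hq4 | hq4
  · obtain ⟨k, hk⟩ : 4 ∣ q - 1 := by omega
    have hGq : gaussSum χ ψ ^ (q - 1) = 1 := by rw [hk, pow_mul, hG, ← pow_mul, ← hk, ht1 hq4]
    rw [Even.neg_one_pow (Nat.even_iff.2 (by omega)), one_mul]
    exact apply_eq_one_of_gaussSum_pow_sub_one q hqu hq4 hχ hGq
  · obtain ⟨k, hk⟩ : 4 ∣ q + 1 := by omega
    have hGq : gaussSum χ ψ ^ (q + 1) = Fintype.card (ZMod p) := by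
      rw [hk, pow_mul, hG, ← pow_mul, ← hk, ht3 hq4, ZMod.card, hpF]
    rw [Odd.neg_one_pow (Nat.odd_iff.2 (by omega)), neg_one_mul]
    exact apply_neg_eq_one_of_gaussSum_pow_add_one q hqu hq4 hχ hψ (by rwa [ZMod.card]) hGq

theorem exists_quarticChar_jacobiSum_sq {p : ℕ} [Fact p.Prime] (hp4 : p % 4 = 1) {L M : ℤ}
    (hLM : (p : ℤ) = L ^ 2 + 4 * M ^ 2) {g : (ZMod p)ˣ} (hg : ∀ x, x ∈ Subgroup.zpowers g) :
    ∃ χ : MulChar (ZMod p) GaussianInt, χ g = Zsqrtd.sqrtd ∧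
      (jacobiSum χ χ ^ 2 = ⟨L, 2 * M⟩ ^ 2 ∨
        jacobiSum χ χ ^ 2 = ⟨L, -(2 * M)⟩ ^ 2) := by
  obtain ⟨χ, hχ⟩ := MulChar.exists_apply_eq hg (ζ := (Zsqrtd.sqrtd : GaussianInt)) <| by
    rw [ZMod.card_units, GaussianInt.isPrimitiveRoot_sqrtd.pow_eq_one_iff_dvd]; omega
  have hord : orderOf χ = 4 := by
    rw [MulChar.orderOf_eq_orderOf_apply hg, hχ, GaussianInt.isPrimitiveRoot_sqrtd.eq_orderOf]
  have hχ4 : χ ^ 4 = 1 := hord ▸ pow_orderOf_eq_one χ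
  have hχ1 : χ ≠ 1 := by rintro rfl; simp at hord
  have hχ2 : χ * χ ≠ 1 := by rw [← sq]; exact pow_ne_one_of_lt_orderOf two_ne_zero (by omega)
  have hnorm := GaussianInt.norm_jacobiSum hχ1 hχ1 hχ2
  rw [ZMod.card] at hnorm
  refine ⟨χ, hχ, GaussianInt.sq_eq_sq_or_sq_eq_star_sq ?_ ?_ ?_ ⟨M, by ring⟩⟩
  · rw [hnorm]; exact Nat.prime_iff_prime_int.1 Fact.out
  · rw [hnorm, hLM, Zsqrtd.norm_def]; ring
  · exact GaussianInt.odd_re_jacobiSum hχ4 hχ4 (by rw [ZMod.card]; omega)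

theorem exists_mulChar_apply_neg_one_pow_mul_eq_one {K : Type*} [Field K] [IsAlgClosed K]
    {p q : ℕ} [Fact p.Prime] [Fact q.Prime] [CharP K q] (hq2 : q ≠ 2) (hqp : ¬q ∣ p)
    {L M m : ℤ} (hLM : (p : ℤ) = L ^ 2 + 4 * M ^ 2)
    (hm : (q : ℤ) ∣ M * (m ^ 4 - 6 * m ^ 2 + 1) + 2 * L * (m ^ 3 - m)) {g : (ZMod p)ˣ}
    (hg : ∀ x, x ∈ Subgroup.zpowers g) {χ : MulChar (ZMod p) GaussianInt}
    (hχ : χ g = Zsqrtd.sqrtd)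
    (hJ : jacobiSum χ χ ^ 2 = ⟨L, 2 * M⟩ ^ 2 ∨
      jacobiSum χ χ ^ 2 = ⟨L, -(2 * M)⟩ ^ 2) :
    ∃ χ' : MulChar (ZMod p) K, orderOf (χ' g) = 4 ∧ χ' ((-1) ^ ((q - 1) / 2) * q) = 1 := by
  obtain ⟨i, hi⟩ := IsAlgClosed.exists_pow_nat_eq (-1 : K) two_pos
  let φ : GaussianInt →+* K := Zsqrtd.lift ⟨i, by rw [← sq, hi]; push_cast; rfl⟩
  have hφ (a b : ℤ) : φ ⟨a, b⟩ = a + b * i := Zsqrtd.lift_apply_apply _ _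
  have hord : orderOf (χ.ringHomComp φ g) = 4 := by
    rw [MulChar.ringHomComp_apply, hχ, show Zsqrtd.sqrtd = (⟨0, 1⟩ : GaussianInt) from rfl,
      hφ]
    push_cast
    rw [zero_add, one_mul, (IsPrimitiveRoot.of_sq_eq_neg_one
      (Ring.two_ne_zero (by rwa [ringChar.eq K q])) hi).eq_orderOf]
  have : NeZero (p : K) := ⟨by rwa [Ne, CharP.cast_eq_zero_iff K q]⟩
  obtain ⟨ζ, hζ⟩ := HasEnoughRootsOfUnity.exists_primitiveRoot K p
  have hψ := AddChar.zmodChar_primitive_of_primitive_root p hζ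
  refine ⟨χ.ringHomComp φ, hord, ?_⟩
  rw [← MulChar.orderOf_eq_orderOf_apply hg] at hord
  rcases hJ with hJ | hJ
  · refine apply_neg_one_pow_mul_eq_one_of_dvd hq2 hqp hord hψ hLM hm hi ?_
    rw [jacobiSum_ringHomComp, ← map_pow, hJ, map_pow, hφ]; push_cast; ring
  · refine apply_neg_one_pow_mul_eq_one_of_dvd hq2 hqp hord hψ hLM hm (i := -i)
      (by rw [neg_sq, hi]) ?_
    rw [jacobiSum_ringHomComp, ← map_pow, hJ, map_pow, hφ]; push_cast; ring

theorem biquadratic_residue_of_dvd_value_general (p : ℕ) (hp : p.Prime) (hp4 : p % 4 = 1)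
    (L M : ℤ) (hLM : (p : ℤ) = L ^ 2 + 4 * M ^ 2)
    (q : ℕ) (hq : q.Prime) (hq2 : Odd q) (hqp : q ≠ p)
    (hm : ∃ m : ℤ, (q : ℤ) ∣ M * (m ^ 4 - 6 * m ^ 2 + 1) + 2 * L * (m ^ 3 - m)) :
    ∃ x : ℤ, x ^ 4 ≡ (-1) ^ ((q - 1) / 2) * (q : ℤ) [ZMOD (p : ℤ)] := by
  obtain ⟨m, hm⟩ := hm
  have := Fact.mk hp
  have := Fact.mk hq
  have hqp' : ¬q ∣ p := (Nat.prime_dvd_prime_iff_eq hq hp).not.2 hqp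
  obtain ⟨g, hg⟩ := IsCyclic.exists_generator (α := (ZMod p)ˣ)
  obtain ⟨χ, hχ, hJ⟩ := exists_quarticChar_jacobiSum_sq hp4 hLM hg
  obtain ⟨χ', hord, hv⟩ := exists_mulChar_apply_neg_one_pow_mul_eq_one
    (K := AlgebraicClosure (ZMod q)) (hq2.ne_two_of_dvd_nat dvd_rfl) hqp' hLM hm hg hχ hJ
  have hu : IsUnit ((-1) ^ ((q - 1) / 2) * (q : ZMod p)) :=
    (isUnit_neg_one.pow _).mul (ZMod.isUnit_prime_of_not_dvd hq hqp')
  obtain ⟨w, hw⟩ := χ'.exists_pow_eq_of_apply_eq_one hg (v := hu.unit) (by rwa [hu.unit_spec])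
  refine ⟨(w : ZMod p).cast, (ZMod.intCast_eq_intCast_iff _ _ _).1 ?_⟩
  simpa [ZMod.intCast_cast, hord, hu.unit_spec] using congrArg Units.val hw

/-- If p ≡ 1 (mod 4) is prime, p = L² + 4M², and q ≠ p is an odd prime not dividing LM
such that q ∣ M(m⁴ - 6m² + 1) + 2L(m³ - m) for some integer m, then
q* = (-1)^((q-1)/2)·q is a biquadratic residue modulo p. -/
theorem biquadratic_residue_of_dvd_value (p : ℕ) (hp : p.Prime) (hp4 : p % 4 = 1)
    (L M : ℤ) (hLM : (p : ℤ) = L ^ 2 + 4 * M ^ 2)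
    (q : ℕ) (hq : q.Prime) (hq2 : Odd q) (hqp : q ≠ p) (hndvd : ¬ (q : ℤ) ∣ L * M)
    (hm : ∃ m : ℤ, (q : ℤ) ∣ M * (m ^ 4 - 6 * m ^ 2 + 1) + 2 * L * (m ^ 3 - m)) :
    ∃ x : ℤ, x ^ 4 ≡ (-1) ^ ((q - 1) / 2) * (q : ℤ) [ZMOD (p : ℤ)] :=
  biquadratic_residue_of_dvd_value_general p hp hp4 L M hLM q hq hq2 hqp hm
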